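/- arXiv:1907.05610 — 5 statements merged into one kernel-verified Lean document; each statement's English description precedes it below -/
import Mathlib

section
/- For every z₁ ∈ ℂ, the point (0, 0, z₁) ∈ ℂ³ can be reached from the origin (0, 0, 0) by a finite chain (in fact a chain of at most three) of entire holomorphic curves γ : ℂ → ℂ³ admissible for the 1-form x dy − y dx − dz, i.e., satisfying γ₁(t)·γ₂′(t) − γ₂(t)·γ₁′(t) − γ₃′(t) = 0 for all t ∈ ℂ. -/
/-- The entire curve `(γ₁, γ₂, γ₃) : ℂ → ℂ³` is holomorphic and admissible for the
1-form `x dy − y dx − dz`, i.e. `γ₁(t)·γ₂′(t) − γ₂(t)·γ₁′(t) − γ₃′(t) = 0` on ℂ. -/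
def EntireAdmissible (γ₁ γ₂ γ₃ : ℂ → ℂ) : Prop :=
  Differentiable ℂ γ₁ ∧ Differentiable ℂ γ₂ ∧ Differentiable ℂ γ₃ ∧
  ∀ t : ℂ, γ₁ t * deriv γ₂ t - γ₂ t * deriv γ₁ t - deriv γ₃ t = 0

/-- `q` is reachable from `p` by a chain of `m + 1` entire holomorphic curves
admissible for `x dy − y dx − dz`. -/
def EntireChain (m : ℕ) (γ₁ γ₂ γ₃ : Fin (m + 1) → ℂ → ℂ) (p q : ℂ × ℂ × ℂ) : Prop :=
  (∀ i, EntireAdmissible (γ₁ i) (γ₂ i) (γ₃ i)) ∧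
  (γ₁ 0 0, γ₂ 0 0, γ₃ 0 0) = p ∧
  (∀ i : Fin m,
    (γ₁ i.castSucc 1, γ₂ i.castSucc 1, γ₃ i.castSucc 1) =
    (γ₁ i.succ 0, γ₂ i.succ 0, γ₃ i.succ 0)) ∧
  (γ₁ (Fin.last m) 1, γ₂ (Fin.last m) 1, γ₃ (Fin.last m) 1) = q

/-!
Along an admissible curve the `z`-coordinate grows by `∫ x dy − y dx`, twice the signed area
swept in the `(x, y)`-plane. The polynomial curve `t ↦ (t³ − t², t² − t)` is a loop at the
origin on `[0, 1]`, so its admissible lift runs from the origin to a point `(0, 0, −1/30)` of the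
`z`-axis. Since the form is homogeneous in `(x, z)`, multiplying `x` and `z` by `−30 z₁` keeps the
lift admissible and makes it end at `(0, 0, z₁)`: a single curve suffices.
-/

theorem entireAdmissible_of_hasDerivAt {f g h f' g' h' : ℂ → ℂ}
    (hf : ∀ t, HasDerivAt f (f' t) t) (hg : ∀ t, HasDerivAt g (g' t) t)
    (hh : ∀ t, HasDerivAt h (h' t) t) (hform : ∀ t, f t * g' t - g t * f' t = h' t) :
    EntireAdmissible f g h :=
  ⟨fun t => (hf t).differentiableAt, fun t => (hg t).differentiableAt,
    fun t => (hh t).differentiableAt, fun t => by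
      rw [(hf t).deriv, (hg t).deriv, (hh t).deriv, hform, sub_self]⟩

theorem EntireAdmissible.const_mul {f g h : ℂ → ℂ} (hfgh : EntireAdmissible f g h) (c : ℂ) :
    EntireAdmissible (fun t => c * f t) g (fun t => c * h t) := by
  obtain ⟨hf, hg, hh, hform⟩ := hfgh
  refine entireAdmissible_of_hasDerivAt (fun t => ((hf t).hasDerivAt).const_mul c)
    (fun t => (hg t).hasDerivAt) (fun t => ((hh t).hasDerivAt).const_mul c) fun t => ?_
  linear_combination c * hform t

theorem entireAdmissible_areaLoop :
    EntireAdmissible (fun t => t ^ 3 - t ^ 2) (fun t => t ^ 2 - t)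
      (fun t => -(6 * t ^ 5 - 15 * t ^ 4 + 10 * t ^ 3) / 30) := by
  refine entireAdmissible_of_hasDerivAt (f' := fun t => 3 * t ^ 2 - 2 * t)
    (g' := fun t => 2 * t - 1) (h' := fun t => -(t ^ 2 * (t - 1) ^ 2))
    (fun t => ?_) (fun t => ?_) (fun t => ?_) (fun t => by ring)
  · exact ((hasDerivAt_pow 3 t).sub (hasDerivAt_pow 2 t)).congr_deriv (by norm_num)
  · exact ((hasDerivAt_pow 2 t).sub (hasDerivAt_id t)).congr_deriv (by norm_num)
  · refine ((((hasDerivAt_pow 5 t).const_mul 6).sub ((hasDerivAt_pow 4 t).const_mul 15)).add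
      ((hasDerivAt_pow 3 t).const_mul 10)).neg.div_const 30 |>.congr_deriv ?_
    norm_num
    ring

theorem EntireAdmissible.entireChain {f g h : ℂ → ℂ} {p q : ℂ × ℂ × ℂ}
    (hfgh : EntireAdmissible f g h) (hp : (f 0, g 0, h 0) = p) (hq : (f 1, g 1, h 1) = q) :
    EntireChain 0 (fun _ => f) (fun _ => g) (fun _ => h) p q :=
  ⟨fun _ => hfgh, hp, fun i => i.elim0, hq⟩

/-- Every point `(0, 0, z₁)` on the `z`-axis is reachable from the origin by a chain
of at most three entire holomorphic curves admissible for `x dy − y dx − dz`. -/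
theorem z_axis_reachable_from_origin (z₁ : ℂ) :
    ∃ m : ℕ, m + 1 ≤ 3 ∧ ∃ γ₁ γ₂ γ₃ : Fin (m + 1) → ℂ → ℂ,
      EntireChain m γ₁ γ₂ γ₃ (0, 0, 0) (0, 0, z₁) :=
  ⟨0, by norm_num, _, _, _,
    (entireAdmissible_areaLoop.const_mul (-30 * z₁)).entireChain (by norm_num)
      (by norm_num; ring)⟩
end

section
/- Any two points p, q ∈ ℂ³ can be connected by a finite chain of entire holomorphic curves admissible for the 1-form x dy − y dx − dz; that is, the whole space ℂ³ is connected by holomorphic integral curves of the distribution {ker(x dy − y dx − dz)}. -/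
open AffineMap Relation

def AdmissiblyJoined (p q : ℂ × ℂ × ℂ) : Prop :=
  ∃ γ₁ γ₂ γ₃ : ℂ → ℂ, EntireAdmissible γ₁ γ₂ γ₃ ∧
    (γ₁ 0, γ₂ 0, γ₃ 0) = p ∧ (γ₁ 1, γ₂ 1, γ₃ 1) = q

theorem entireAdmissible_lineMap {x y z x' y' z' : ℂ} (h : z' - z = x * y' - y * x') :
    EntireAdmissible (lineMap x x') (lineMap y y') (lineMap z z') := by
  have hdiff (a b : ℂ) : Differentiable ℂ (lineMap a b) :=
    fun _ => hasDerivAt_lineMap.differentiableAt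
  refine ⟨hdiff x x', hdiff y y', hdiff z z', fun t => ?_⟩
  simp only [hasDerivAt_lineMap.deriv, lineMap_apply_ring', h]
  ring

theorem admissiblyJoined_of_sub_eq {x y z x' y' z' : ℂ} (h : z' - z = x * y' - y * x') :
    AdmissiblyJoined (x, y, z) (x', y', z') :=
  ⟨_, _, _, entireAdmissible_lineMap h, by simp, by simp⟩

theorem transGen_admissiblyJoined_of_fst_snd_eq (x y z z' : ℂ) :
    TransGen AdmissiblyJoined (x, y, z) (x, y, z') := by
  set s := z' - z
  have h₁ : AdmissiblyJoined (x, y, z) (x + 1, y, z - y) :=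
    admissiblyJoined_of_sub_eq (by ring)
  have h₂ : AdmissiblyJoined (x + 1, y, z - y) (x + 1, y + s, z - y + (x + 1) * s) :=
    admissiblyJoined_of_sub_eq (by ring)
  have h₃ : AdmissiblyJoined (x + 1, y + s, z - y + (x + 1) * s) (x, y, z') :=
    admissiblyJoined_of_sub_eq (by ring)
  exact .head h₁ (.head h₂ (.single h₃))

theorem EntireChain.cons {m : ℕ} {γ₁ γ₂ γ₃ : ℂ → ℂ} {Γ₁ Γ₂ Γ₃ : Fin (m + 1) → ℂ → ℂ}
    {p r q : ℂ × ℂ × ℂ} (hγ : EntireAdmissible γ₁ γ₂ γ₃) (hp : (γ₁ 0, γ₂ 0, γ₃ 0) = p)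
    (hr : (γ₁ 1, γ₂ 1, γ₃ 1) = r) (hΓ : EntireChain m Γ₁ Γ₂ Γ₃ r q) :
    EntireChain (m + 1) (Fin.cons γ₁ Γ₁) (Fin.cons γ₂ Γ₂) (Fin.cons γ₃ Γ₃) p q := by
  obtain ⟨hadm, hstart, hlink, hend⟩ := hΓ
  refine ⟨Fin.cases hγ hadm, hp, Fin.cases ?_ fun i => ?_, hend⟩
  · simpa [hr] using hstart.symm
  · simpa using hlink i

theorem exists_entireChain_of_transGen {p q : ℂ × ℂ × ℂ} (h : TransGen AdmissiblyJoined p q) :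
    ∃ (m : ℕ) (γ₁ γ₂ γ₃ : Fin (m + 1) → ℂ → ℂ), EntireChain m γ₁ γ₂ γ₃ p q := by
  induction h using TransGen.head_induction_on with
  | single h =>
    obtain ⟨γ₁, γ₂, γ₃, hγ, hp, hq⟩ := h
    exact ⟨0, fun _ => γ₁, fun _ => γ₂, fun _ => γ₃, fun _ => hγ, hp, Fin.elim0, hq⟩
  | head h _ ih =>
    obtain ⟨γ₁, γ₂, γ₃, hγ, hp, hr⟩ := h
    obtain ⟨m, Γ₁, Γ₂, Γ₃, hΓ⟩ := ih
    exact ⟨m + 1, _, _, _, hΓ.cons hγ hp hr⟩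

/-- ℂ³ is connected by finite chains of entire holomorphic curves admissible
for the 1-form `x dy − y dx − dz`. -/
theorem C3_connected_by_admissible_curves (p q : ℂ × ℂ × ℂ) :
    ∃ (m : ℕ) (γ₁ γ₂ γ₃ : Fin (m + 1) → ℂ → ℂ), EntireChain m γ₁ γ₂ γ₃ p q := by
  obtain ⟨x, y, z⟩ := p
  obtain ⟨x', y', z'⟩ := q
  have hline : AdmissiblyJoined (x, y, z) (x', y', z + (x * y' - y * x')) :=
    admissiblyJoined_of_sub_eq (by ring)
  exact exists_entireChain_of_transGen
    (.head hline (transGen_admissiblyJoined_of_fst_snd_eq x' y' _ z'))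
end

section
/- For every point (x₁, y₁, z₁) ∈ ℂ³ with x₁ ≠ 0, there exists a single entire holomorphic curve γ : ℂ → ℂ³ admissible for the 1-form x dy − y dx − dz such that γ(0) = (0, 0, 0) and γ(1) = (x₁, y₁, z₁). (One may take γ(t) = (x₁ t, y₁ t² − c t(t−1), (1/3) x₁ y₁ t³ − (1/3) c x₁ t³) where c ∈ ℂ solves z₁ = (1/3) x₁ y₁ − (1/3) c x₁.) -/
theorem entireAdmissible_of_hasDerivAt_s4 {γ₁ γ₂ γ₃ γ₁' γ₂' : ℂ → ℂ}
    (h₁ : ∀ t, HasDerivAt γ₁ (γ₁' t) t) (h₂ : ∀ t, HasDerivAt γ₂ (γ₂' t) t)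
    (h₃ : ∀ t, HasDerivAt γ₃ (γ₁ t * γ₂' t - γ₂ t * γ₁' t) t) :
    EntireAdmissible γ₁ γ₂ γ₃ := by
  refine ⟨fun t => (h₁ t).differentiableAt, fun t => (h₂ t).differentiableAt,
    fun t => (h₃ t).differentiableAt, fun t => ?_⟩
  rw [(h₁ t).deriv, (h₂ t).deriv, (h₃ t).deriv, sub_self]

theorem entireAdmissible_line_parabola (a b d : ℂ) :
    EntireAdmissible (fun t => a * t) (fun t => b * t ^ 2 + d * t)
      (fun t => a * b / 3 * t ^ 3) := by
  have hsq (t : ℂ) : HasDerivAt (fun t : ℂ => t ^ 2) (2 * t) t := by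
    simpa using hasDerivAt_pow 2 t
  have hcube (t : ℂ) : HasDerivAt (fun t : ℂ => t ^ 3) (3 * t ^ 2) t := by
    simpa using hasDerivAt_pow 3 t
  exact entireAdmissible_of_hasDerivAt_s4 (γ₁' := fun _ => a) (γ₂' := fun t => b * (2 * t) + d)
    (fun _ => hasDerivAt_const_mul a)
    (fun t => ((hsq t).const_mul b).fun_add (hasDerivAt_const_mul d))
    (fun t => ((hcube t).const_mul (a * b / 3)).congr_deriv (by ring))

/-- Every point with `x₁ ≠ 0` is reachable from the origin by a single entire
holomorphic curve admissible for `x dy − y dx − dz`. -/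
theorem single_curve_reaches_point (x₁ y₁ z₁ : ℂ) (hx₁ : x₁ ≠ 0) :
    ∃ γ₁ γ₂ γ₃ : ℂ → ℂ, EntireAdmissible γ₁ γ₂ γ₃ ∧
      (γ₁ 0, γ₂ 0, γ₃ 0) = (0, 0, 0) ∧ (γ₁ 1, γ₂ 1, γ₃ 1) = (x₁, y₁, z₁) := by
  set b := 3 * z₁ / x₁
  refine ⟨_, _, _, entireAdmissible_line_parabola x₁ b (y₁ - b), by simp, ?_⟩
  have hz : x₁ * b / 3 = z₁ := by
    simp only [b]
    field_simp
  simp [hz]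
end

section
/- For every point (x₁, y₁, z₁) ∈ ℂ³ with x₁ ≠ 0, there exists a single entire holomorphic curve γ : ℂ → ℂ³ admissible for the 1-form x dy + dz such that γ(0) = (0, 0, 0) and γ(1) = (x₁, y₁, z₁). (Such a curve can be produced by a generating function of the form S(x) = a x² + b x³, taking γ(t) = (x₁ t, S′(x₁ t), S(x₁ t) − x₁ t·S′(x₁ t)), since the linear system 2a x₁ + 3b x₁² = y₁, −a x₁² − 2b x₁³ = z₁ has determinant −x₁⁴ ≠ 0.) -/
/-- The entire curve `(γ₁, γ₂, γ₃) : ℂ → ℂ³` is holomorphic and admissible for the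
1-form `x dy + dz`, i.e. `γ₁(t)·γ₂′(t) + γ₃′(t) = 0` for all `t ∈ ℂ`. -/
def EntireAdmissibleContact (γ₁ γ₂ γ₃ : ℂ → ℂ) : Prop :=
  Differentiable ℂ γ₁ ∧ Differentiable ℂ γ₂ ∧ Differentiable ℂ γ₃ ∧
  ∀ t : ℂ, γ₁ t * deriv γ₂ t + deriv γ₃ t = 0

/-!
An entire generating function `S` and an entire curve `c` give the admissible curve
`(c, S′ ∘ c, S ∘ c - c · S′ ∘ c)`: differentiating the third coordinate, the terms
`S′(c) c′` cancel and what is left is `-c · (S′ ∘ c)′`. For `c t = x₁ t` the endpoint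
conditions at `t = 1` are `S′(x₁) = y₁` and `S(x₁) - x₁ S′(x₁) = z₁`, which the cubic
`S(x) = a x² + b x³` meets because the linear system in `(a, b)` has determinant `-x₁⁴ ≠ 0`.
-/

theorem entireAdmissibleContact_of_generatingFunction {S c : ℂ → ℂ}
    (hS : Differentiable ℂ S) (hc : Differentiable ℂ c) :
    EntireAdmissibleContact c (fun t => deriv S (c t))
      (fun t => S (c t) - c t * deriv S (c t)) := by
  have hS' : Differentiable ℂ (deriv S) := hS.deriv
  have hy (t : ℂ) : HasDerivAt (fun t => deriv S (c t))
      (deriv (deriv S) (c t) * deriv c t) t :=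
    (hS' (c t)).hasDerivAt.comp t (hc t).hasDerivAt
  have hz (t : ℂ) : HasDerivAt (fun t => S (c t) - c t * deriv S (c t))
      (deriv S (c t) * deriv c t -
        (deriv c t * deriv S (c t) + c t * (deriv (deriv S) (c t) * deriv c t))) t :=
    ((hS (c t)).hasDerivAt.comp t (hc t).hasDerivAt).sub ((hc t).hasDerivAt.mul (hy t))
  refine ⟨hc, fun t => (hy t).differentiableAt, fun t => (hz t).differentiableAt, fun t => ?_⟩
  rw [(hy t).deriv, (hz t).deriv]
  ring

theorem hasDerivAt_cubic (a b x : ℂ) :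
    HasDerivAt (fun x => a * x ^ 2 + b * x ^ 3) (2 * a * x + 3 * b * x ^ 2) x := by
  have := ((hasDerivAt_pow 2 x).const_mul a).add ((hasDerivAt_pow 3 x).const_mul b)
  exact this.congr_deriv (by push_cast; ring)

theorem exists_cubic_generatingFunction {x₁ : ℂ} (hx₁ : x₁ ≠ 0) (y₁ z₁ : ℂ) :
    ∃ S : ℂ → ℂ, Differentiable ℂ S ∧ S 0 = 0 ∧ deriv S 0 = 0 ∧
      deriv S x₁ = y₁ ∧ S x₁ - x₁ * deriv S x₁ = z₁ := by
  set a : ℂ := (2 * x₁ * y₁ + 3 * z₁) / x₁ ^ 2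
  set b : ℂ := -(x₁ * y₁ + 2 * z₁) / x₁ ^ 3
  have hS (x : ℂ) := hasDerivAt_cubic a b x
  refine ⟨_, fun x => (hS x).differentiableAt, by simp, by simp [(hS 0).deriv], ?_, ?_⟩ <;>
  · simp only [(hS x₁).deriv, a, b]
    field_simp
    ring

/-- Every point with `x₁ ≠ 0` is reachable from the origin by a single entire
holomorphic curve admissible for the contact form `x dy + dz`. -/
theorem single_contact_curve_reaches_point (x₁ y₁ z₁ : ℂ) (hx₁ : x₁ ≠ 0) :
    ∃ γ₁ γ₂ γ₃ : ℂ → ℂ, EntireAdmissibleContact γ₁ γ₂ γ₃ ∧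
      (γ₁ 0, γ₂ 0, γ₃ 0) = (0, 0, 0) ∧ (γ₁ 1, γ₂ 1, γ₃ 1) = (x₁, y₁, z₁) := by
  obtain ⟨S, hS, hS0, hS'0, hS'x₁, hSx₁⟩ := exists_cubic_generatingFunction hx₁ y₁ z₁
  refine ⟨_, _, _, entireAdmissibleContact_of_generatingFunction hS
    (differentiable_id.const_mul x₁), ?_, ?_⟩
  · simp [hS0, hS'0]
  · simp [← hS'x₁, hSx₁]
end

section
/- For n ≥ 2, the distribution of complex tangents is completely non-integrable within each sphere: any two points p, q on the unit sphere S = {w ∈ ℂⁿ : ‖w‖ = 1} can be connected by a finite chain of differentiable paths γ : [0, 1] → S satisfying ⟨γ′(t), γ(t)⟩ = 0 for all t, i.e., real one-dimensional paths that are at each moment tangent to the complex tangent space of the sphere. -/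
/-- `γ` is a differentiable path `[0,1] → ℂⁿ` lying on the unit sphere whose
velocity at every moment lies in the complex tangent space of the sphere, i.e.
`⟪γ′(t), γ(t)⟫ = 0` for the Hermitian inner product. -/
def ComplexTangentSpherePath (n : ℕ) (γ : ℝ → EuclideanSpace ℂ (Fin n)) : Prop :=
  DifferentiableOn ℝ γ (Set.Icc 0 1) ∧
  (∀ t ∈ Set.Icc (0 : ℝ) 1, ‖γ t‖ = 1) ∧
  (∀ t ∈ Set.Icc (0 : ℝ) 1,
    inner (𝕜 := ℂ) (derivWithin γ (Set.Icc 0 1) t) (γ t) = 0)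

/-! The great circle `γ t = cos (θ t) • a + sin (θ t) • v` through a complex-orthonormal pair
`a, v` is tangent to the complex tangent spaces:
`⟪γ', γ⟫ = θ (-sin cos ⟪a, a⟫ + cos sin ⟪v, v⟫) = 0`.
Choose a unit `w ⊥ p` and multiply it by a phase so that `⟪w, q⟫ = c` is real. Then
`q - c • w` is orthogonal to `w`, so `q = cos θ • w + sin θ • v` for some unit `v ⊥ w`,
and the two arcs `p → w` and `w → q` connect `p` to `q`. -/

open Real Module
open scoped InnerProductSpace

section ComplexInnerProductSpace

variable {E : Type*} [NormedAddCommGroup E] [InnerProductSpace ℂ E]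

lemma inner_real_smul_left (r : ℝ) (x y : E) : ⟪r • x, y⟫_ℂ = r * ⟪x, y⟫_ℂ := by
  rw [← Complex.coe_smul, inner_smul_left, Complex.conj_ofReal]

lemma inner_real_smul_right (r : ℝ) (x y : E) : ⟪x, r • y⟫_ℂ = r * ⟪x, y⟫_ℂ := by
  rw [← Complex.coe_smul, inner_smul_right]

noncomputable def greatArc (θ : ℝ) (a v : E) (t : ℝ) : E :=
  cos (θ * t) • a + sin (θ * t) • v

@[simp]
lemma greatArc_zero (θ : ℝ) (a v : E) : greatArc θ a v 0 = a := by
  simp [greatArc]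

lemma greatArc_one (θ : ℝ) (a v : E) : greatArc θ a v 1 = cos θ • a + sin θ • v := by
  simp [greatArc]

lemma hasDerivAt_greatArc (θ : ℝ) (a v : E) (t : ℝ) :
    HasDerivAt (greatArc θ a v) (θ • (-sin (θ * t) • a + cos (θ * t) • v)) t := by
  have hθ : HasDerivAt (fun t : ℝ => θ * t) θ t := by
    simpa using (hasDerivAt_id t).const_mul θ
  have hcos := ((hasDerivAt_cos (θ * t)).comp t hθ).smul_const a
  have hsin := ((hasDerivAt_sin (θ * t)).comp t hθ).smul_const v
  convert hcos.add hsin using 1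
  · rfl
  rw [smul_add, smul_smul, smul_smul, mul_comm θ (-_), mul_comm θ (cos _)]

variable {a v : E}

lemma norm_greatArc (ha : ‖a‖ = 1) (hv : ‖v‖ = 1) (hav : ⟪a, v⟫_ℂ = 0) (θ t : ℝ) :
    ‖greatArc θ a v t‖ = 1 := by
  have hperp : ⟪cos (θ * t) • a, sin (θ * t) • v⟫_ℂ = 0 := by
    rw [inner_real_smul_left, inner_real_smul_right, hav, mul_zero, mul_zero]
  have hsq := norm_add_sq_eq_norm_sq_add_norm_sq_of_inner_eq_zero _ _ hperp
  simp only [norm_smul, ha, hv, Real.norm_eq_abs, mul_one, abs_mul_abs_self] at hsq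
  rwa [← sq, ← sq, ← sq, cos_sq_add_sin_sq,
    pow_eq_one_iff_of_nonneg (norm_nonneg _) two_ne_zero] at hsq

lemma inner_deriv_greatArc_self (ha : ‖a‖ = 1) (hv : ‖v‖ = 1) (hav : ⟪a, v⟫_ℂ = 0)
    (θ t : ℝ) :
    ⟪θ • (-sin (θ * t) • a + cos (θ * t) • v), greatArc θ a v t⟫_ℂ = 0 := by
  have hva : ⟪v, a⟫_ℂ = 0 := inner_eq_zero_symm.1 hav
  simp only [greatArc, inner_add_left, inner_add_right, inner_real_smul_left,
    inner_real_smul_right, hav, hva, inner_self_eq_norm_sq_to_K, ha, hv]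
  push_cast
  ring

lemma exists_norm_eq_one_inner_eq_zero (h : 2 ≤ finrank ℂ E) (p : E) :
    ∃ w : E, ‖w‖ = 1 ∧ ⟪p, w⟫_ℂ = 0 := by
  have : FiniteDimensional ℂ E := Module.finite_of_finrank_pos (by omega)
  have hspan : finrank ℂ (ℂ ∙ p) ≤ 1 := by
    simpa using finrank_span_le_card ({p} : Set E)
  have hsum := (ℂ ∙ p).finrank_add_finrank_orthogonal
  have hne : (ℂ ∙ p)ᗮ ≠ ⊥ := fun hbot => by
    rw [hbot, finrank_bot] at hsum
    omega
  obtain ⟨w, hw, hw0⟩ := Submodule.exists_mem_ne_zero_of_ne_bot hne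
  refine ⟨(‖w‖⁻¹ : ℂ) • w, norm_smul_inv_norm hw0, ?_⟩
  rw [inner_smul_right, Submodule.inner_right_of_mem_orthogonal
    (Submodule.mem_span_singleton_self p) hw, mul_zero]

lemma Complex.exists_norm_eq_one_conj_mul_eq_norm (x : ℂ) :
    ∃ z : ℂ, ‖z‖ = 1 ∧ starRingEnd ℂ z * x = ‖x‖ := by
  refine ⟨Complex.exp (x.arg * Complex.I), Complex.norm_exp_ofReal_mul_I _, ?_⟩
  have key : starRingEnd ℂ (Complex.exp (x.arg * Complex.I)) *
      (‖x‖ * Complex.exp (x.arg * Complex.I)) = ‖x‖ := by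
    rw [mul_left_comm, Complex.conj_mul', Complex.norm_exp_ofReal_mul_I]
    simp
  rwa [Complex.norm_mul_exp_arg_mul_I] at key

lemma exists_norm_eq_one_inner_eq_zero_inner_eq_ofReal (h : 2 ≤ finrank ℂ E) (p q : E) :
    ∃ w : E, ‖w‖ = 1 ∧ ⟪p, w⟫_ℂ = 0 ∧ ∃ c : ℝ, ⟪w, q⟫_ℂ = c := by
  obtain ⟨w, hw, hpw⟩ := exists_norm_eq_one_inner_eq_zero h p
  obtain ⟨z, hz, hzq⟩ := Complex.exists_norm_eq_one_conj_mul_eq_norm ⟪w, q⟫_ℂ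
  refine ⟨z • w, by rw [norm_smul, hz, hw, one_mul], ?_, ‖⟪w, q⟫_ℂ‖, ?_⟩
  · rw [inner_smul_right, hpw, mul_zero]
  · rw [inner_smul_left, hzq]

lemma exists_norm_eq_one_inner_eq_zero_norm_smul_eq (h : 2 ≤ finrank ℂ E) {w u : E}
    (hwu : ⟪w, u⟫_ℂ = 0) :
    ∃ v : E, ‖v‖ = 1 ∧ ⟪w, v⟫_ℂ = 0 ∧ ‖u‖ • v = u := by
  by_cases hu : u = 0
  · obtain ⟨v, hv, hwv⟩ := exists_norm_eq_one_inner_eq_zero h w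
    exact ⟨v, hv, hwv, by simp [hu]⟩
  · refine ⟨‖u‖⁻¹ • u, ?_, ?_, ?_⟩
    · rw [norm_smul, norm_inv, norm_norm, inv_mul_cancel₀ (norm_ne_zero_iff.2 hu)]
    · rw [inner_real_smul_right, hwu, mul_zero]
    · rw [smul_smul, mul_inv_cancel₀ (norm_ne_zero_iff.2 hu), one_smul]

lemma exists_greatArc_eq (h : 2 ≤ finrank ℂ E) {w q : E} (hw : ‖w‖ = 1) (hq : ‖q‖ = 1)
    {c : ℝ} (hc : ⟪w, q⟫_ℂ = c) :
    ∃ (θ : ℝ) (v : E), ‖v‖ = 1 ∧ ⟪w, v⟫_ℂ = 0 ∧ greatArc θ w v 1 = q := by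
  set u := q - c • w with hu
  have hww : ⟪w, w⟫_ℂ = 1 := by simp [inner_self_eq_norm_sq_to_K, hw]
  have hwu : ⟪w, u⟫_ℂ = 0 := by
    rw [inner_sub_right, inner_real_smul_right, hc, hww, mul_one, sub_self]
  have hpyth : ‖q‖ * ‖q‖ = ‖c • w‖ * ‖c • w‖ + ‖u‖ * ‖u‖ := by
    rw [← add_sub_cancel (c • w) q]
    refine norm_add_sq_eq_norm_sq_add_norm_sq_of_inner_eq_zero (𝕜 := ℂ) _ _ ?_
    rw [inner_real_smul_left, hwu, mul_zero]
  rw [hq, norm_smul, hw, Real.norm_eq_abs, mul_one, mul_one, abs_mul_abs_self] at hpyth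
  have hc1 : c ^ 2 ≤ 1 := by nlinarith [mul_self_nonneg ‖u‖]
  obtain ⟨v, hv, hwv, huv⟩ := exists_norm_eq_one_inner_eq_zero_norm_smul_eq h hwu
  refine ⟨arccos c, v, hv, hwv, ?_⟩
  have hsin : sin (arccos c) = ‖u‖ := by
    rw [sin_arccos, ← Real.sqrt_sq (norm_nonneg u)]
    congr 1
    linarith
  rw [greatArc_one, cos_arccos (by nlinarith) (by nlinarith), hsin, huv, hu, add_sub_cancel]

end ComplexInnerProductSpace

lemma complexTangentSpherePath_greatArc {n : ℕ} {a v : EuclideanSpace ℂ (Fin n)}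
    (ha : ‖a‖ = 1) (hv : ‖v‖ = 1) (hav : ⟪a, v⟫_ℂ = 0) (θ : ℝ) :
    ComplexTangentSpherePath n (greatArc θ a v) := by
  refine ⟨fun t _ => (hasDerivAt_greatArc θ a v t).differentiableAt.differentiableWithinAt,
    fun t _ => norm_greatArc ha hv hav θ t, fun t ht => ?_⟩
  rw [(hasDerivAt_greatArc θ a v t).hasDerivWithinAt.derivWithin
    (uniqueDiffOn_Icc zero_lt_one t ht)]
  exact inner_deriv_greatArc_self ha hv hav θ t

/-- For `n ≥ 2`, the distribution of complex tangents on the unit sphere of ℂⁿ is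
completely non-integrable within the sphere: any two points of the unit sphere
can be connected by a finite chain of differentiable paths on the sphere tangent
to the complex tangent spaces. -/
theorem sphere_connected_by_complex_tangent_paths
    (n : ℕ) (hn : 2 ≤ n) (p q : EuclideanSpace ℂ (Fin n))
    (hp : ‖p‖ = 1) (hq : ‖q‖ = 1) :
    ∃ (m : ℕ) (γ : Fin (m + 1) → ℝ → EuclideanSpace ℂ (Fin n)),
      (∀ i, ComplexTangentSpherePath n (γ i)) ∧
      γ 0 0 = p ∧
      (∀ i : Fin m, γ i.castSucc 1 = γ i.succ 0) ∧
      γ (Fin.last m) 1 = q := by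
  have hdim : 2 ≤ finrank ℂ (EuclideanSpace ℂ (Fin n)) := by
    rwa [finrank_euclideanSpace_fin]
  obtain ⟨w, hw, hpw, c, hwq⟩ := exists_norm_eq_one_inner_eq_zero_inner_eq_ofReal hdim p q
  obtain ⟨θ, v, hv, hwv, harc⟩ := exists_greatArc_eq hdim hw hq hwq
  refine ⟨1, ![greatArc (π / 2) p w, greatArc θ w v], ?_, ?_, ?_, ?_⟩
  · exact Fin.forall_fin_two.2 ⟨complexTangentSpherePath_greatArc hp hw hpw _,
      complexTangentSpherePath_greatArc hw hv hwv _⟩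
  · simp
  · simp [greatArc_one]
  · exact harc
end
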